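/- If f* and g are distinct parallel homogeneous-direction linear separators in ℝ^d (same unit normal vector w, offsets b_{f*} ≠ b_g), and δ = |b_{f*} − b_g| is the distance between their boundaries, then if the dataset labeled by f* contains a point x with distance to g's boundary strictly less than δ, no maximum-margin separator consistent with that dataset equals g. -/

import Mathlib

/-!
Two affine functionals with the same zero set (and nonzero linear part) are proportional, so a
unit-normal separator whose boundary is that of `g` is `±g` and has the same margin `m` as `g`;
the close point forces `m < δ`. If the separator is `+g`, shifting `f*` towards `g` by `m` gives
a separator whose margin exceeds `m`: points on the positive side of `f*` stay at distance `≥ δ`,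
the others at distance `> m`. If it is `-g`, then no point is labelled negative, and translating
`f*` away from the data makes the margin arbitrarily large.
-/

open scoped InnerProductSpace

/-- `(w, b)` (weakly) separates the labeled set `S`. -/
def Separates {d : ℕ} (w : EuclideanSpace ℝ (Fin d)) (b : ℝ)
    (S : Finset (EuclideanSpace ℝ (Fin d) × ℝ)) : Prop :=
  ∀ p ∈ S, 0 ≤ p.2 * (⟪w, p.1⟫_ℝ + b)

/-- The margin of the hyperplane `(w, b)` (with `‖w‖ = 1`) on the set `S`. -/
noncomputable def Margin {d : ℕ} (w : EuclideanSpace ℝ (Fin d)) (b : ℝ)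
    (S : Finset (EuclideanSpace ℝ (Fin d) × ℝ)) : ℝ :=
  sInf {r : ℝ | ∃ p ∈ S, r = |⟪w, p.1⟫_ℝ + b|}

/-- `(w, b)` is a maximum-margin separator of `S`. -/
def IsMaxMargin {d : ℕ} (w : EuclideanSpace ℝ (Fin d)) (b : ℝ)
    (S : Finset (EuclideanSpace ℝ (Fin d) × ℝ)) : Prop :=
  ‖w‖ = 1 ∧ Separates w b S ∧
    ∀ w' b', ‖w'‖ = 1 → Separates w' b' S → Margin w' b' S ≤ Margin w b S

theorem exists_eq_smul_of_setOf_inner_add_eq {E : Type*} [NormedAddCommGroup E]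
    [InnerProductSpace ℝ E] {w w' : E} {b b' : ℝ} (hw : w ≠ 0)
    (h : {x : E | ⟪w', x⟫_ℝ + b' = 0} = {x | ⟪w, x⟫_ℝ + b = 0}) :
    ∃ c : ℝ, w' = c • w ∧ b' = c * b := by
  have hww : ⟪w, w⟫_ℝ ≠ 0 := inner_self_ne_zero.mpr hw
  set c := ⟪w', w⟫_ℝ / ⟪w, w⟫_ℝ
  -- project `y` onto the zero set of `⟪w, ·⟫ + b` along `w`
  have key : ∀ y, ⟪w', y⟫_ℝ + b' = c * (⟪w, y⟫_ℝ + b) := by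
    intro y
    have hy : y - ((⟪w, y⟫_ℝ + b) / ⟪w, w⟫_ℝ) • w ∈ {x : E | ⟪w, x⟫_ℝ + b = 0} := by
      simp only [Set.mem_ofPred_eq, inner_sub_right, real_inner_smul_right]
      field_simp
      ring
    rw [← h, Set.mem_ofPred_eq, inner_sub_right, real_inner_smul_right] at hy
    field_simp at hy
    simp only [c]
    field_simp
    linear_combination hy
  have hb : b' = c * b := by simpa using key 0
  refine ⟨c, ext_inner_right ℝ fun y => ?_, hb⟩
  rw [real_inner_smul_left]
  linarith [key y]

section Margin

variable {d : ℕ} {w : EuclideanSpace ℝ (Fin d)} {b : ℝ}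
  {S : Finset (EuclideanSpace ℝ (Fin d) × ℝ)}

theorem margin_eq_inf' (hS : S.Nonempty) :
    Margin w b S = S.inf' hS fun p => |⟪w, p.1⟫_ℝ + b| := by
  rw [Finset.inf'_eq_csInf_image, Margin]
  congr 1
  ext r
  simp [eq_comm]

theorem margin_nonneg : 0 ≤ Margin w b S :=
  Real.sInf_nonneg fun _ ⟨_, _, hr⟩ => hr ▸ abs_nonneg _

theorem margin_le {p : EuclideanSpace ℝ (Fin d) × ℝ} (hp : p ∈ S) :
    Margin w b S ≤ |⟪w, p.1⟫_ℝ + b| := by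
  rw [margin_eq_inf' ⟨p, hp⟩]
  exact Finset.inf'_le _ hp

theorem lt_margin {m : ℝ} (hS : S.Nonempty) (h : ∀ p ∈ S, m < |⟪w, p.1⟫_ℝ + b|) :
    m < Margin w b S := by
  rw [margin_eq_inf' hS]
  exact (Finset.lt_inf'_iff hS).mpr h

theorem margin_smul (c : ℝ) : Margin (c • w) (c * b) S = |c| * Margin w b S := by
  rw [Margin, Margin, ← smul_eq_mul |c|, ← Real.sInf_smul_of_nonneg (abs_nonneg c)]
  congr 1
  ext r
  simp [Set.mem_smul_set, real_inner_smul_left, ← mul_add, abs_mul, eq_comm]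

end Margin

section Labelled

variable {d : ℕ} {w : EuclideanSpace ℝ (Fin d)} {bf bg : ℝ}
  {S : Finset (EuclideanSpace ℝ (Fin d) × ℝ)}

theorem exists_separates_lt_margin_of_separates
    (hlab : ∀ p ∈ S, p.2 = if 0 ≤ ⟪w, p.1⟫_ℝ + bf then (1 : ℝ) else -1) (hS : S.Nonempty)
    (hsep : Separates w bg S) (hm : Margin w bg S < bf - bg) :
    ∃ b, Separates w b S ∧ Margin w bg S < Margin w b S := by
  set m := Margin w bg S
  have hside : ∀ p ∈ S, p.2 = 1 ∧ m < ⟪w, p.1⟫_ℝ + (bf - m) ∨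
      p.2 = -1 ∧ ⟪w, p.1⟫_ℝ + (bf - m) < -m := by
    intro p hp
    have hsep := hsep p hp
    have hle : m ≤ |⟪w, p.1⟫_ℝ + bg| := margin_le hp
    rw [hlab p hp] at hsep ⊢
    split_ifs at hsep ⊢ with hf
    · rw [one_mul] at hsep
      rw [abs_of_nonneg hsep] at hle
      left; constructor <;> linarith
    · right; constructor <;> linarith
  refine ⟨bf - m, fun p hp => ?_, lt_margin hS fun p hp => ?_⟩
  · have hm₀ : 0 ≤ m := margin_nonneg
    rcases hside p hp with ⟨h1, h⟩ | ⟨h1, h⟩ <;> rw [h1] <;> linarith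
  · rcases hside p hp with ⟨-, h⟩ | ⟨-, h⟩
    · exact lt_abs.mpr (Or.inl h)
    · exact lt_abs.mpr (Or.inr (by linarith))

theorem exists_separates_lt_margin_of_separates_neg
    (hlab : ∀ p ∈ S, p.2 = if 0 ≤ ⟪w, p.1⟫_ℝ + bf then (1 : ℝ) else -1) (hlt : bg < bf)
    (hS : S.Nonempty) (hsep : Separates (-w) (-bg) S) (m : ℝ) :
    ∃ b, Separates w b S ∧ m < Margin w b S := by
  have hpos : ∀ p ∈ S, p.2 = 1 ∧ 0 ≤ ⟪w, p.1⟫_ℝ + bf := by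
    intro p hp
    have hsep := hsep p hp
    rw [inner_neg_left] at hsep
    rw [hlab p hp] at hsep ⊢
    split_ifs at hsep ⊢ with hf
    · exact ⟨rfl, hf⟩
    · linarith
  refine ⟨bf + |m| + 1, fun p hp => ?_, lt_margin hS fun p hp => ?_⟩
  · obtain ⟨h1, h⟩ := hpos p hp
    rw [h1, one_mul]
    linarith [abs_nonneg m]
  · obtain ⟨-, h⟩ := hpos p hp
    rw [abs_of_nonneg (by linarith [abs_nonneg m])]
    linarith [le_abs_self m]

end Labelled

/-- `f*` and `g` are parallel separators with unit normal `w` and offsets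
`b_f ≠ b_g` (WLOG `b_g < b_f`), `δ = b_f - b_g`. If the dataset labeled by `f*` contains a
point at distance `< δ` from `g`'s boundary, then no maximum-margin separator consistent
with the dataset has the same boundary as `g`. -/
theorem stmt_4 {d : ℕ} (w : EuclideanSpace ℝ (Fin d)) (hw : ‖w‖ = 1)
    (bf bg : ℝ) (hlt : bg < bf)
    (S : Finset (EuclideanSpace ℝ (Fin d) × ℝ))
    (hlab : ∀ p ∈ S, p.2 = if 0 ≤ ⟪w, p.1⟫_ℝ + bf then (1 : ℝ) else -1)
    (hclose : ∃ p ∈ S, |⟪w, p.1⟫_ℝ + bg| < bf - bg) :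
    ∀ w' b', IsMaxMargin w' b' S →
      {x : EuclideanSpace ℝ (Fin d) | ⟪w', x⟫_ℝ + b' = 0} ≠
        {x : EuclideanSpace ℝ (Fin d) | ⟪w, x⟫_ℝ + bg = 0} := by
  rintro w' b' ⟨hw', hsep, hmax⟩ heq
  obtain ⟨p₀, hp₀, hclose⟩ := hclose
  have hS : S.Nonempty := ⟨p₀, hp₀⟩
  obtain ⟨c, rfl, rfl⟩ :=
    exists_eq_smul_of_setOf_inner_add_eq (norm_ne_zero_iff.mp (hw ▸ one_ne_zero)) heq
  have hc : |c| = 1 := by simpa [norm_smul, hw] using hw'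
  have hM : Margin (c • w) (c * bg) S = Margin w bg S := by rw [margin_smul, hc, one_mul]
  obtain ⟨b, hsep', hlt'⟩ : ∃ b, Separates w b S ∧ Margin w bg S < Margin w b S := by
    rcases (abs_eq zero_le_one).mp hc with rfl | rfl
    · rw [one_smul, one_mul] at hsep
      exact exists_separates_lt_margin_of_separates hlab hS hsep ((margin_le hp₀).trans_lt hclose)
    · rw [neg_one_smul, neg_one_mul] at hsep
      exact exists_separates_lt_margin_of_separates_neg hlab hlt hS hsep _
  exact (hmax w b hw hsep').not_gt (hM ▸ hlt')
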